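/- (Value differences under ρ-period finite dependence, equation (11).) Let Z and D be finite nonempty sets with baseline action 0 ∈ D, β ∈ ℝ, ρ ≥ 1, and let u_τ, f_τ, V_τ, v_τ, ψ_τ (τ = 0, …, ρ+1) satisfy, for all τ ≤ ρ, z, d: V_τ(z) = ψ_τ(d, z) + v_τ(z, d) and v_τ(z, d) = u_τ(z, d) + β Σ_{z'} V_{τ+1}(z') f_τ(z' | z, d). For each τ = 1, …, ρ fix weights w_τ : Z × Z × D → ℝ (depending on the initial state z and current state z' but not on the initial action) with Σ_{d'} w_τ(z, z', d') = 1, define κ_0(z' | z, d) = f_0(z' | z, d) and κ_τ(z'' | z, d) = Σ_{z'} κ_{τ−1}(z' | z, d) Σ_{d'} w_τ(z, z', d') f_τ(z'' | z', d'), and set κ̃_τ(z' | z, d) = κ_τ(z' | z, d) − κ_τ(z' | z, 0). Suppose the ρ-period dependence condition holds: Σ_{z'} [ Σ_{d'} w_ρ(z, z', d') f_ρ(z'' | z', d') ] κ̃_{ρ−1}(z' | z, d) = 0 for all z, z'' ∈ Z and d ∈ D. Then for all z, d: v_0(z, d) − v_0(z, 0) = (u_0(z, d) − u_0(z, 0))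 + Σ_{τ=1}^{ρ} β^τ Σ_{z'} [ Σ_{d'} w_τ(z, z', d') ( u_τ(z', d') + ψ_τ(d', z') ) ] κ̃_{τ−1}(z' | z, d). -/

import Mathlib

/-!
Averaging the identity `V_τ = ψ_τ(d', ·) + u_τ(·, d') + β E[V_{τ+1} | ·, d']` over the decision
weights `w_τ` (which sum to one) and integrating it against the signed measure `κ̃_{τ-1}` turns
`Σ V_τ κ̃_{τ-1}` into the period-`τ` weighted payoff term plus `β Σ V_{τ+1} κ̃_τ`. Unrolling this
from the period-0 Bellman equation for `ρ` periods leaves the remainder `β^(ρ+1) Σ V_{ρ+1} κ̃_ρ`,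
and the `ρ`-period dependence condition says exactly that `κ̃_ρ = 0`.
-/

/-- The weighted `τ`-step-forward transition densities `κ_τ(z' | z, d)` built from the
period-`τ` transition kernels `f` and decision weights `w` (depending on the initial
state `z` and the current state `z'`, but not on the initial action): `κ_0 = f_0` and
`κ_τ(z'' | z, d) = Σ_{z'} κ_{τ-1}(z' | z, d) Σ_{d'} w_τ(z, z', d') f_τ(z'' | z', d')`. -/
noncomputable def kappaSW {Z D : Type*} [Fintype Z] [Fintype D]
    (f : ℕ → Z → D → Z → ℝ) (w : ℕ → Z → Z → D → ℝ) :
    ℕ → Z → D → Z → ℝ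
  | 0 => fun z d z' => f 0 z d z'
  | (τ + 1) => fun z d z'' =>
      ∑ z' : Z, kappaSW f w τ z d z' * ∑ d' : D, w (τ + 1) z z' d' * f (τ + 1) z' d' z''

open Finset

theorem kappaSW_succ_sub {Z D : Type*} [Fintype Z] [Fintype D]
    (f : ℕ → Z → D → Z → ℝ) (w : ℕ → Z → Z → D → ℝ) (n : ℕ) (z : Z) (d d₀ : D) (z'' : Z) :
    kappaSW f w (n + 1) z d z'' - kappaSW f w (n + 1) z d₀ z'' =
      ∑ z' : Z, (∑ d' : D, w (n + 1) z z' d' * f (n + 1) z' d' z'') *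
        (kappaSW f w n z d z' - kappaSW f w n z d₀ z') := by
  simp only [kappaSW, ← sum_sub_distrib, ← sub_mul, mul_comm]

section WeightedBellman

variable {Z D : Type*} [Fintype Z] [Fintype D] (β : ℝ) (u : Z → D → ℝ) (ψ : D → Z → ℝ)
  (f : Z → D → Z → ℝ) (V V' : Z → ℝ) (w : Z → D → ℝ)

theorem eq_weighted_payoff_add_of_bellman (hw : ∀ z, ∑ d, w z d = 1)
    (hV : ∀ z d, V z = ψ d z + (u z d + β * ∑ z', V' z' * f z d z')) (z : Z) :
    V z = ∑ d, w z d * (u z d + ψ d z) + β * ∑ z', V' z' * ∑ d, w z d * f z d z' := by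
  calc V z = ∑ d, w z d * V z := by rw [← sum_mul, hw, one_mul]
    _ = ∑ d, (w z d * (u z d + ψ d z) + β * ∑ z', V' z' * (w z d * f z d z')) := by
        refine sum_congr rfl fun d _ => ?_
        have hpull : ∑ z', V' z' * (w z d * f z d z') = w z d * ∑ z', V' z' * f z d z' := by
          rw [mul_sum]
          exact sum_congr rfl fun _ _ => mul_left_comm _ _ _
        rw [hV z d, hpull]
        ring
    _ = _ := by
        rw [sum_add_distrib, ← mul_sum, sum_comm]
        simp only [mul_sum]

theorem sum_mul_eq_weighted_payoff_add_of_bellman (hw : ∀ z, ∑ d, w z d = 1)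
    (hV : ∀ z d, V z = ψ d z + (u z d + β * ∑ z', V' z' * f z d z')) (a : Z → ℝ) :
    ∑ z, V z * a z = ∑ z, (∑ d, w z d * (u z d + ψ d z)) * a z
      + β * ∑ z', V' z' * ∑ z, (∑ d, w z d * f z d z') * a z := by
  simp only [eq_weighted_payoff_add_of_bellman β u ψ f V V' w hw hV, add_mul, sum_add_distrib,
    mul_sum, sum_mul, mul_assoc]
  exact congrArg _ sum_comm

end WeightedBellman

theorem mul_eq_sum_range_add_of_recurrence (β : ℝ) (X c : ℕ → ℝ) (n : ℕ)
    (h : ∀ k < n, X k = c k + β * X (k + 1)) :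
    β * X 0 = ∑ τ ∈ range n, β ^ (τ + 1) * c τ + β ^ (n + 1) * X n := by
  induction n with
  | zero => simp
  | succ n ih =>
    rw [ih fun k hk => h k (by omega), h n (by omega), sum_range_succ]
    ring

theorem value_differences_rho_period_finite_dependence_general
    {Z D : Type*} [Fintype Z] [Fintype D]
    (d₀ : D) (β : ℝ) (ρ : ℕ) (hρ : 1 ≤ ρ)
    (u : ℕ → Z → D → ℝ) (f : ℕ → Z → D → Z → ℝ)
    (V : ℕ → Z → ℝ) (v : ℕ → Z → D → ℝ) (ψ : ℕ → D → Z → ℝ)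
    (hAM : ∀ τ ≤ ρ, ∀ (z : Z) (d : D), V τ z = ψ τ d z + v τ z d)
    (hBellman : ∀ τ ≤ ρ, ∀ (z : Z) (d : D),
      v τ z d = u τ z d + β * ∑ z' : Z, V (τ + 1) z' * f τ z d z')
    (w : ℕ → Z → Z → D → ℝ)
    (hw : ∀ τ, 1 ≤ τ → τ ≤ ρ → ∀ (z z' : Z), ∑ d' : D, w τ z z' d' = 1)
    (hdep : ∀ (z z'' : Z) (d : D),
      ∑ z' : Z, (∑ d' : D, w ρ z z' d' * f ρ z' d' z'') *
        (kappaSW f w (ρ - 1) z d z' - kappaSW f w (ρ - 1) z d₀ z') = 0) :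
    ∀ (z : Z) (d : D),
      v 0 z d - v 0 z d₀ = (u 0 z d - u 0 z d₀)
        + ∑ τ ∈ Finset.range ρ, β ^ (τ + 1) *
            ∑ z' : Z,
              (∑ d' : D, w (τ + 1) z z' d' *
                (u (τ + 1) z' d' + ψ (τ + 1) d' z')) *
              (kappaSW f w τ z d z' - kappaSW f w τ z d₀ z') := by
  intro z d
  set Δκ : ℕ → Z → ℝ := fun τ z' => kappaSW f w τ z d z' - kappaSW f w τ z d₀ z'
  set X : ℕ → ℝ := fun τ => ∑ z', V (τ + 1) z' * Δκ τ z'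
  have hbase : v 0 z d - v 0 z d₀ = (u 0 z d - u 0 z d₀) + β * X 0 := by
    simp only [X, Δκ, kappaSW, hBellman 0 (Nat.zero_le ρ), mul_sub, sum_sub_distrib]
    ring
  have hstep : ∀ τ < ρ, X τ = ∑ z', (∑ d', w (τ + 1) z z' d' *
      (u (τ + 1) z' d' + ψ (τ + 1) d' z')) * Δκ τ z' + β * X (τ + 1) := by
    intro τ hτ
    simp only [X, Δκ, kappaSW_succ_sub]
    exact sum_mul_eq_weighted_payoff_add_of_bellman β _ _ _ _ _ _ (hw (τ + 1) (by omega) hτ z)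
      (fun z' d' => by rw [hAM _ hτ, hBellman _ hτ]) _
  have hvanish : X ρ = 0 := by
    obtain ⟨m, rfl⟩ : ∃ m, ρ = m + 1 := ⟨ρ - 1, by omega⟩
    have hΔκ : ∀ z'', Δκ (m + 1) z'' = 0 := fun z'' => by
      simpa only [Δκ, kappaSW_succ_sub, Nat.add_sub_cancel] using hdep z z'' d
    simp only [X, hΔκ, mul_zero, sum_const_zero]
  rw [hbase, mul_eq_sum_range_add_of_recurrence β X _ ρ hstep, hvanish, mul_zero, add_zero]

/-- Value differences under ρ-period finite dependence (equation (11)): if the weighted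
ρ-step-forward transition differences relative to the baseline action `d₀` vanish, the
period-0 value differences are expressed by ρ periods of weighted flow payoffs and
ψ-corrections, without the future integrated value function. -/
theorem value_differences_rho_period_finite_dependence
    {Z D : Type*} [Fintype Z] [Fintype D] [Nonempty Z] [Nonempty D]
    (d₀ : D) (β : ℝ) (ρ : ℕ) (hρ : 1 ≤ ρ)
    (u : ℕ → Z → D → ℝ) (f : ℕ → Z → D → Z → ℝ)
    (V : ℕ → Z → ℝ) (v : ℕ → Z → D → ℝ) (ψ : ℕ → D → Z → ℝ)
    (hAM : ∀ τ ≤ ρ, ∀ (z : Z) (d : D), V τ z = ψ τ d z + v τ z d)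
    (hBellman : ∀ τ ≤ ρ, ∀ (z : Z) (d : D),
      v τ z d = u τ z d + β * ∑ z' : Z, V (τ + 1) z' * f τ z d z')
    (w : ℕ → Z → Z → D → ℝ)
    (hw : ∀ τ, 1 ≤ τ → τ ≤ ρ → ∀ (z z' : Z), ∑ d' : D, w τ z z' d' = 1)
    (hdep : ∀ (z z'' : Z) (d : D),
      ∑ z' : Z, (∑ d' : D, w ρ z z' d' * f ρ z' d' z'') *
        (kappaSW f w (ρ - 1) z d z' - kappaSW f w (ρ - 1) z d₀ z') = 0) :
    ∀ (z : Z) (d : D),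
      v 0 z d - v 0 z d₀ = (u 0 z d - u 0 z d₀)
        + ∑ τ ∈ Finset.range ρ, β ^ (τ + 1) *
            ∑ z' : Z,
              (∑ d' : D, w (τ + 1) z z' d' *
                (u (τ + 1) z' d' + ψ (τ + 1) d' z')) *
              (kappaSW f w τ z d z' - kappaSW f w τ z d₀ z') :=
  value_differences_rho_period_finite_dependence_general d₀ β ρ hρ u f V v ψ hAM hBellman w hw hdep
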